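/- arXiv:1505.01321 — 2 statements merged into one kernel-verified Lean document; each statement's English description precedes it below -/
import Mathlib

section
/- Let n ≥ 5. There is no digraph X on n vertices whose Hermitian adjacency matrix H(X) has characteristic polynomial (t + (n−1))·(t − 1)^{n−1}; that is, no digraph of order n ≥ 5 has H-spectrum {−(n−1), 1^{(n−1)}}. -/
/-! If the `H`-spectrum is `{-(n-1), 1^(n-1)}` then, `H` being diagonalizable, `A = H - I`
satisfies `A² = -n A`. The diagonal of `A²` gives `∑_w |A u w|² = n` with every `|A u w| ≤ 1`,
so all entries of `A` are unimodular; then `(A²) u v = ∑_w A u w * A w v` is a sum of `n`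
unimodular numbers equal to `-n A u v`, which forces `A u w * A w v = -A u v` for every `w`.
Taking `w = o`, two equal entries `A o u = A o v` would give `A u v = -1`, which no off-diagonal
entry of `H` is; so the row of `o` embeds the `n` vertices into `{-1, 1, i, -i}`. -/

open Matrix Complex Polynomial

/-- Hermitian adjacency matrix of a digraph given by its arc relation `E`. -/
def hermAdj {V : Type*} (E : V → V → Prop) [DecidableRel E] : Matrix V V ℂ :=
  fun u v =>
    if E u v ∧ E v u then 1
    else if E u v then Complex.I
    else if E v u then -Complex.I
    else 0

open ComplexConjugate

namespace Complex

theorem eq_one_of_norm_le_one_of_re_eq_one {w : ℂ} (hw : ‖w‖ ≤ 1) (hre : w.re = 1) :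
    w = 1 := by
  have him : w.im = 0 :=
    abs_re_eq_norm.1 (le_antisymm (abs_re_le_norm w) (hw.trans_eq (by simp [hre])))
  exact Complex.ext hre him

theorem eq_of_sum_eq_card_mul {ι : Type*} [Fintype ι] {z : ι → ℂ} {c : ℂ}
    (hz : ∀ i, ‖z i‖ ≤ 1) (hc : ‖c‖ = 1) (hsum : ∑ i, z i = Fintype.card ι * c) (i : ι) :
    z i = c := by
  have hnorm : ∀ j, ‖z j * conj c‖ ≤ 1 := fun j => by
    rw [norm_mul, norm_conj, hc, mul_one]; exact hz j
  have hsum_re : ∑ j, (z j * conj c).re = ∑ _j : ι, (1 : ℝ) := by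
    rw [← re_sum, ← Finset.sum_mul, hsum, mul_assoc, mul_conj, normSq_eq_norm_sq, hc]
    simp
  have h1 : (z i * conj c).re = 1 :=
    (Finset.sum_eq_sum_iff_of_le fun j _ => (re_le_norm _).trans (hnorm j)).1 hsum_re i
      (Finset.mem_univ i)
  calc z i = z i * conj c * c := by rw [mul_assoc, conj_mul', hc]; simp
    _ = c := by rw [eq_one_of_norm_le_one_of_re_eq_one (hnorm i) h1, one_mul]

end Complex

namespace Matrix

variable {ι : Type*}

theorem IsHermitian.aeval_eq_zero_of_isRoot_charpoly [Fintype ι] [DecidableEq ι] {𝕜 : Type*}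
    [RCLike 𝕜] {A : Matrix ι ι 𝕜} (hA : A.IsHermitian) {p : ℝ[X]}
    (hp : ∀ x : ℝ, A.charpoly.IsRoot (x : 𝕜) → p.IsRoot x) : aeval A p = 0 := by
  rw [← cfc_polynomial p A hA.isSelfAdjoint, ← cfc_zero ℝ A]
  refine cfc_congr fun x hx => hp x ?_
  obtain ⟨i, rfl⟩ := hA.spectrum_real_eq_range_eigenvalues ▸ hx
  simpa [hA.charpoly_eq, eval_prod, Finset.prod_eq_zero_iff] using ⟨i, sub_self _⟩

theorem IsHermitian.sub_one_mul_self_of_charpoly_eq [Fintype ι] [DecidableEq ι]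
    {H : Matrix ι ι ℂ} (hH : H.IsHermitian) (m : ℝ) (k : ℕ)
    (hchar : H.charpoly = (X + C ((m : ℂ) - 1)) * (X - C 1) ^ k) :
    (H - 1) * (H - 1) = -(m : ℂ) • (H - 1) := by
  have hquad := hH.aeval_eq_zero_of_isRoot_charpoly (p := (X + C (m - 1)) * (X - C 1))
    fun x hx => by
      simp only [RCLike.ofReal_eq_complex_ofReal, hchar, IsRoot, eval_mul, eval_pow, eval_add,
        eval_sub, eval_X, eval_C, mul_eq_zero, pow_eq_zero_iff'] at hx ⊢
      exact_mod_cast hx.imp_right And.left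
  simp only [map_mul, map_add, map_sub, aeval_X, aeval_C] at hquad
  rw [Algebra.algebraMap_eq_smul_one, Algebra.algebraMap_eq_smul_one, one_smul, add_mul, sub_mul,
    smul_mul_assoc, one_mul] at hquad
  rw [← ofReal_neg, Complex.coe_smul, sub_mul H, one_mul]
  linear_combination (norm := module) hquad

variable {A : Matrix ι ι ℂ}

theorem norm_apply_eq_one_of_mul_self_eq [Fintype ι] (hA : A.IsHermitian)
    (hdiag : ∀ u, A u u = -1) (hle : ∀ u v, ‖A u v‖ ≤ 1)
    (hsq : A * A = -(Fintype.card ι : ℂ) • A) (u v : ι) :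
    ‖A u v‖ = 1 := by
  have h := Complex.eq_of_sum_eq_card_mul (z := fun w => A u w * A w u) (c := 1)
    (fun w => by rw [norm_mul]; exact mul_le_one₀ (hle u w) (norm_nonneg _) (hle w u)) norm_one
    (by simp [← mul_apply, hsq, hdiag]) v
  rw [← hA.apply v u, star_def, mul_conj', ← ofReal_pow, ← ofReal_one, ofReal_inj] at h
  exact (pow_eq_one_iff_of_nonneg (norm_nonneg _) two_ne_zero).1 h

theorem mul_apply_mul_apply_of_mul_self_eq [Fintype ι] (hnorm : ∀ u v, ‖A u v‖ = 1)
    (hsq : A * A = -(Fintype.card ι : ℂ) • A) (u v w : ι) : A u w * A w v = -A u v :=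
  Complex.eq_of_sum_eq_card_mul (z := fun w => A u w * A w v)
    (fun w => by rw [norm_mul, hnorm, hnorm, one_mul])
    (by rw [norm_neg, hnorm]) (by simp [← mul_apply, hsq]) w

theorem apply_eq_neg_one_of_apply_eq_apply (hA : A.IsHermitian) (hnorm : ∀ u v, ‖A u v‖ = 1)
    (hmul : ∀ u v w, A u w * A w v = -A u v) {o u v : ι} (h : A o u = A o v) : A u v = -1 := by
  rw [← neg_neg (A u v), ← hmul u v o, ← h, ← hA.apply o u, star_def, mul_conj', hnorm]
  simp

theorem card_le_four_of_mul_self_eq [Fintype ι] (hA : A.IsHermitian) (hdiag : ∀ u, A u u = -1)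
    (hoff : ∀ u v, u ≠ v → A u v ∈ ({0, 1, I, -I} : Finset ℂ))
    (hsq : A * A = -(Fintype.card ι : ℂ) • A) : Fintype.card ι ≤ 4 := by
  have hle : ∀ u v, ‖A u v‖ ≤ 1 := fun u v => by
    rcases eq_or_ne u v with rfl | huv
    · simp [hdiag]
    · have h := hoff u v huv
      simp only [Finset.mem_insert, Finset.mem_singleton] at h
      rcases h with h | h | h | h <;> simp [h]
  have hnorm := norm_apply_eq_one_of_mul_self_eq hA hdiag hle hsq
  have hmul := mul_apply_mul_apply_of_mul_self_eq hnorm hsq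
  rcases isEmpty_or_nonempty ι with hι | ⟨⟨o⟩⟩
  · simp
  have hrow : Function.Injective (A o) := fun u v h => by
    by_contra huv
    have h' := hoff u v huv
    rw [apply_eq_neg_one_of_apply_eq_apply hA hnorm hmul h] at h'
    norm_num [Complex.ext_iff] at h'
  have hrange : ∀ u, A o u ∈ ({-1, 1, I, -I} : Finset ℂ) := fun u => by
    rcases eq_or_ne o u with rfl | hou
    · simp [hdiag]
    · have h := hoff o u hou
      have h1 := hnorm o u
      simp only [Finset.mem_insert, Finset.mem_singleton] at h ⊢
      rcases h with h | h | h | h <;> simp_all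
  rw [← Finset.card_univ]
  exact (Finset.card_le_card_of_injOn (A o) (fun u _ => hrange u) hrow.injOn).trans
    Finset.card_le_four

end Matrix

section Digraph

variable {V : Type*} {E : V → V → Prop} [DecidableRel E]

theorem hermAdj_apply_mem (u v : V) : hermAdj E u v ∈ ({0, 1, I, -I} : Finset ℂ) := by
  unfold hermAdj
  split_ifs <;> simp

theorem hermAdj_apply_self (hirr : ∀ v, ¬ E v v) (u : V) : hermAdj E u u = 0 := by
  simp [hermAdj, hirr u]

variable (E) in
theorem hermAdj_isHermitian : (hermAdj E).IsHermitian := by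
  ext u v
  simp only [conjTranspose_apply, hermAdj]
  by_cases huv : E u v <;> by_cases hvu : E v u <;> simp [huv, hvu]

end Digraph

/-- For `n ≥ 5`, no digraph on `n` vertices has `H`-spectrum `{-(n-1), 1^(n-1)}`,
i.e. no Hermitian adjacency matrix has characteristic polynomial
`(t + (n-1)) * (t - 1)^(n-1)`. -/
theorem stmt5 {n : ℕ} (hn : 5 ≤ n) (E : Fin n → Fin n → Prop) [DecidableRel E]
    (hirr : ∀ v, ¬ E v v) :
    (hermAdj E).charpoly ≠
      (Polynomial.X + Polynomial.C ((n : ℂ) - 1)) *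
        (Polynomial.X - Polynomial.C 1) ^ (n - 1) := by
  intro hchar
  have hH := hermAdj_isHermitian E
  have hsq : (hermAdj E - 1) * (hermAdj E - 1) =
      -(Fintype.card (Fin n) : ℂ) • (hermAdj E - 1) := by
    simpa using hH.sub_one_mul_self_of_charpoly_eq n (n - 1) (by simpa using hchar)
  have hcard := card_le_four_of_mul_self_eq (hH.sub isHermitian_one)
    (fun u => by simp [hermAdj_apply_self hirr])
    (fun u v huv => by simpa [one_apply_ne huv] using hermAdj_apply_mem u v) hsq
  simp only [Fintype.card_fin] at hcard
  omega
end

section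
/- A digraph X has the property that every eigenvalue λ of its Hermitian adjacency matrix H(X) satisfies λ ∈ {−1, 1} if and only if every vertex of the underlying graph Γ(X) has degree exactly 1 (that is, Γ(X) is isomorphic to a disjoint union m·K₂ of m independent edges for some m). -/
/-!
A Hermitian matrix has all eigenvalues in `{-1, 1}` exactly when its square is the identity,
since conjugation by the unitary of the spectral theorem turns `H * H = 1` into `D * D = 1`
for the diagonal matrix `D` of eigenvalues. For `H = H(X)` the entry `(H * H) u v` is
`∑ w, H u w * H w v`, and `H u w * H w u` is `1` or `0` according as `u` and `w` are adjacent in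
`Γ(X)`. So the diagonal of `H * H` lists the degrees, and when all degrees are `1` every
off-diagonal term vanishes, because a vertex adjacent to both `u` and `v` has degree at least two.
-/

open Matrix Complex

namespace Matrix.IsHermitian

theorem mul_self_eq_one_iff {𝕜 n : Type*} [RCLike 𝕜] [Fintype n] [DecidableEq n]
    {A : Matrix n n 𝕜} (hA : A.IsHermitian) :
    A * A = 1 ↔ ∀ i, hA.eigenvalues i = 1 ∨ hA.eigenvalues i = -1 := by
  conv_lhs => rw [hA.spectral_theorem, ← map_mul, map_eq_one_iff _ (EquivLike.injective _),
    diagonal_mul_diagonal, diagonal_eq_one, funext_iff]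
  refine forall_congr' fun i => ?_
  rw [← _root_.mul_self_eq_one_iff]
  simp only [Function.comp_apply, Pi.one_apply]
  exact_mod_cast Iff.rfl

end Matrix.IsHermitian

section hermAdj

variable {V : Type*} (E : V → V → Prop) [DecidableRel E]

def underlyingNbhd [Fintype V] (v : V) : Finset V :=
  {w | E v w ∨ E w v}

theorem hermAdj_mul_hermAdj_swap (v w : V) :
    hermAdj E v w * hermAdj E w v = if E v w ∨ E w v then 1 else 0 := by
  unfold hermAdj
  by_cases h₁ : E v w <;> by_cases h₂ : E w v <;> simp [h₁, h₂, mul_comm]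

variable [Fintype V]

theorem hermAdj_ne_zero_iff_mem_underlyingNbhd {v w : V} :
    hermAdj E v w ≠ 0 ↔ w ∈ underlyingNbhd E v := by
  unfold hermAdj
  by_cases h₁ : E v w <;> by_cases h₂ : E w v <;> simp [underlyingNbhd, h₁, h₂]

theorem mem_underlyingNbhd_comm {v w : V} :
    w ∈ underlyingNbhd E v ↔ v ∈ underlyingNbhd E w := by
  simp [underlyingNbhd, or_comm]

theorem hermAdj_mul_self_apply_self (v : V) :
    (hermAdj E * hermAdj E) v v = (underlyingNbhd E v).card := by
  simp [mul_apply, hermAdj_mul_hermAdj_swap, Finset.sum_boole, underlyingNbhd]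

theorem hermAdj_mul_self_apply_of_ne (hdeg : ∀ w, (underlyingNbhd E w).card ≤ 1) {u v : V}
    (huv : u ≠ v) : (hermAdj E * hermAdj E) u v = 0 := by
  refine Finset.sum_eq_zero fun w _ => ?_
  by_contra h
  have hu : u ∈ underlyingNbhd E w := (mem_underlyingNbhd_comm E).mp
    ((hermAdj_ne_zero_iff_mem_underlyingNbhd E).mp (left_ne_zero_of_mul h))
  have hv : v ∈ underlyingNbhd E w :=
    (hermAdj_ne_zero_iff_mem_underlyingNbhd E).mp (right_ne_zero_of_mul h)
  exact huv (Finset.card_le_one.mp (hdeg w) u hu v hv)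

theorem hermAdj_mul_self_eq_one_iff [DecidableEq V] :
    hermAdj E * hermAdj E = 1 ↔ ∀ v, (underlyingNbhd E v).card = 1 := by
  constructor
  · intro h v
    have hvv := hermAdj_mul_self_apply_self E v
    rw [h, one_apply_eq] at hvv
    exact_mod_cast hvv.symm
  · intro hdeg
    ext u v
    rcases eq_or_ne u v with rfl | huv
    · simp [hermAdj_mul_self_apply_self, hdeg]
    · simp [hermAdj_mul_self_apply_of_ne E (fun w => (hdeg w).le) huv, huv]

end hermAdj

theorem stmt16_general {V : Type*} [Fintype V] [DecidableEq V]
    (E : V → V → Prop) [DecidableRel E]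
    (hH : (hermAdj E).IsHermitian) :
    (∀ i : V, hH.eigenvalues i = 1 ∨ hH.eigenvalues i = -1) ↔
      (∀ v : V, (Finset.univ.filter (fun w => E v w ∨ E w v)).card = 1) := by
  rw [← hH.mul_self_eq_one_iff, hermAdj_mul_self_eq_one_iff]
  rfl

/-- A digraph has all `H`-eigenvalues in `{-1, 1}` if and only if every vertex of its
underlying graph has degree exactly `1` (i.e. the underlying graph is a disjoint
union of independent edges). -/
theorem stmt16 {V : Type*} [Fintype V] [DecidableEq V]
    (E : V → V → Prop) [DecidableRel E] (hirr : ∀ v, ¬ E v v)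
    (hH : (hermAdj E).IsHermitian) :
    (∀ i : V, hH.eigenvalues i = 1 ∨ hH.eigenvalues i = -1) ↔
      (∀ v : V, (Finset.univ.filter (fun w => E v w ∨ E w v)).card = 1) :=
  stmt16_general E hH
end
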